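/- Set θ̂ = √(A/(1+α)). There exist ε₀ > 0 and C > 0, depending only on A and C₀ and independent of T, such that if 0 < ε ≤ ε₀ then for every T > 0 and all (τ,y) ∈ [0,T] × [0,θ̂]: ζ̃(τ,y) ≤ max{C, (2/θ̂)·sup{ζ̃(τ′,θ̂) : τ′ ∈ [0,T]}}·y. -/

import Mathlib

/-!
Maximum principle with a quadratic barrier. With `M = max C ((2/θ̂) sup_τ ζ̃(τ,θ̂))` and `η > 0`,
the function `M (y - ε B y²/2 + η)` lies strictly above `ζ̃` on the parabolic boundary of
`[0,T] × [0,θ̂]`: at `y = 0` because `ζ̃` vanishes there, at `y = θ̂` by the choice of `M`, and at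
`τ = 0` because `Q(y) ≤ Z⁻¹ θ̂^(α-1) y`. At a first touching point `∂_τζ̃ ≥ 0`, `∂_yζ̃` is the slope
of the barrier and `∂_yyζ̃ ≤ -M ε B`, and the equation then forces `∂_τζ̃ < 0`. For `y` above a
scale `ε R`, `𝓔` is small compared with `y`, so the effective potential
`V - A (1/y² - 1/(y+𝓔)²)` is nonnegative (this uses `y² ≤ A/(1+α)`); below it the potential is
only bounded below by `-(2α+1)/4`, but there `ζ̃ = O(ε + η)` and the curvature `ε B` wins.
Letting `η → 0` gives `ζ̃ ≤ M y`.
-/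

open Real Filter MeasureTheory

/-- The potential V(y) = y²/16 + 1/4 + A/y² − (1+α)/2. -/
noncomputable def Vfun (A α y : ℝ) : ℝ :=
  y ^ 2 / 16 + 1 / 4 + A / y ^ 2 - (1 + α) / 2

/-- The normalized ground state Q(y) = Z⁻¹·y^α·e^{−y²/8}. -/
noncomputable def Qfun (α Z y : ℝ) : ℝ :=
  Z⁻¹ * y ^ α * Real.exp (-y ^ 2 / 8)

/-- The error term 𝓔(τ,y) in the self-similar variables. -/
noncomputable def curlyE (α ε C₀ τ y : ℝ) : ℝ :=
  ε * Real.exp (-τ / 2) *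
    (y ^ 2 / 4 - α * Real.log (1 + ε⁻¹ * Real.exp (τ / 2) * y) + Real.log C₀)

/-- A solution ζ̃ of the self-similar equation, with the regularity,
boundary, initial, integrability and decay assumptions of the context. -/
def SolTildeZeta (A α ε C₀ Z : ℝ) (ζ : ℝ → ℝ → ℝ) : Prop :=
  ContinuousOn (fun p : ℝ × ℝ => ζ p.1 p.2) (Set.Ici 0 ×ˢ Set.Ici 0) ∧
  (∀ y > (0:ℝ), ContDiffOn ℝ 1 (fun τ => ζ τ y) (Set.Ioi 0)) ∧
  (∀ τ > (0:ℝ), ContDiffOn ℝ 2 (fun y => ζ τ y) (Set.Ioi 0)) ∧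
  (∀ τ ≥ (0:ℝ), ∀ y ≥ (0:ℝ), 0 ≤ ζ τ y) ∧
  (∀ τ > (0:ℝ), ∀ y > (0:ℝ),
    deriv (fun s => ζ s y) τ - deriv (deriv (fun z => ζ τ z)) y
        + Vfun A α y * ζ τ y =
      ε * (α + 1 / 2) * Real.exp (-τ / 2)
          * (deriv (fun z => ζ τ z) y - y / 4 * ζ τ y)
        + A * (1 / y ^ 2 - 1 / (y + curlyE α ε C₀ τ y) ^ 2) * ζ τ y) ∧
  (∀ τ > (0:ℝ), ζ τ 0 = 0) ∧
  (∀ y > (0:ℝ), ζ 0 y = Qfun α Z y) ∧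
  (∀ τ ≥ (0:ℝ),
    MeasureTheory.IntegrableOn (fun y => (ζ τ y) ^ 2) (Set.Ioi 0) ∧
    MeasureTheory.IntegrableOn (fun y => (deriv (fun z => ζ τ z) y) ^ 2) (Set.Ioi 0) ∧
    MeasureTheory.IntegrableOn (fun y => (y * ζ τ y) ^ 2) (Set.Ioi 0)) ∧
  (∀ T > (0:ℝ), ∀ δ > (0:ℝ), ∃ Y : ℝ, ∀ τ ∈ Set.Icc (0:ℝ) T, ∀ y ≥ Y,
    |ζ τ y| ≤ δ ∧ |deriv (fun z => ζ τ z) y| ≤ δ)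

open Set Topology

theorem deriv_nonneg_of_eventually_le_left {f : ℝ → ℝ} {a : ℝ} (hf : DifferentiableAt ℝ f a)
    (h : ∀ᶠ t in 𝓝[<] a, f t ≤ f a) : 0 ≤ deriv f a := by
  refine ge_of_tendsto (hasDerivAt_iff_tendsto_slope_left_right.1 hf.hasDerivAt).1 ?_
  filter_upwards [h, self_mem_nhdsWithin] with t ht hta
  rw [slope_comm]
  exact (slope_nonneg_iff_of_le (le_of_lt hta)).2 ht

theorem IsLocalMax.deriv_deriv_nonpos {f : ℝ → ℝ} {x : ℝ} (h : IsLocalMax f x)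
    (hc : ContinuousAt f x) : deriv (deriv f) x ≤ 0 := by
  by_contra! hpos
  have hmin : IsLocalMin f x := isLocalMin_of_deriv_deriv_pos hpos h.deriv_eq_zero hc
  have hconst : f =ᶠ[𝓝 x] fun _ => f x :=
    (h.and hmin).mono fun z hz => le_antisymm hz.1 hz.2
  have hderiv : deriv f =ᶠ[𝓝 x] fun _ => 0 :=
    hconst.deriv.trans (Eventually.of_forall fun _ => deriv_const _ _)
  rw [hderiv.deriv_eq, deriv_const] at hpos
  exact lt_irrefl _ hpos

theorem deriv_eq_of_isLocalMax_sub {f g : ℝ → ℝ} {x : ℝ} (h : IsLocalMax (fun z => f z - g z) x)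
    (hf : DifferentiableAt ℝ f x) (hg : DifferentiableAt ℝ g x) : deriv f x = deriv g x := by
  have := h.deriv_eq_zero
  rw [deriv_fun_sub hf hg] at this
  linarith

theorem deriv_deriv_le_of_isLocalMax_sub {f g : ℝ → ℝ} {x : ℝ}
    (h : IsLocalMax (fun z => f z - g z) x) (hf : ContDiffAt ℝ 2 f x) (hg : ContDiffAt ℝ 2 g x) :
    deriv (deriv f) x ≤ deriv (deriv g) x := by
  have hdiff : ∀ {u : ℝ → ℝ}, ContDiffAt ℝ 2 u x → ∀ᶠ z in 𝓝 x, DifferentiableAt ℝ u z :=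
    fun hu => (hu.eventually (by simp)).mono fun z hz => hz.differentiableAt (by simp)
  have hsub : deriv (fun z => f z - g z) =ᶠ[𝓝 x] fun z => deriv f z - deriv g z := by
    filter_upwards [hdiff hf, hdiff hg] with z hfz hgz using deriv_fun_sub hfz hgz
  have h2 := h.deriv_deriv_nonpos (hf.continuousAt.sub hg.continuousAt)
  rw [hsub.deriv_eq, deriv_fun_sub ((hf.derivWithin le_rfl).differentiableAt one_ne_zero)
    ((hg.derivWithin le_rfl).differentiableAt one_ne_zero)] at h2
  linarith

theorem exists_first_touch {β : Type*} [TopologicalSpace β] [T2Space β] {s : Set β}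
    (hs : IsCompact s) {T : ℝ} {v : ℝ → β → ℝ}
    (hv : ContinuousOn (fun p : ℝ × β => v p.1 p.2) (Icc 0 T ×ˢ s))
    (h0 : ∀ y ∈ s, v 0 y < 0) (hpos : ∃ t ∈ Icc 0 T, ∃ y ∈ s, 0 ≤ v t y) :
    ∃ t ∈ Ioc 0 T, ∃ y ∈ s, 0 ≤ v t y ∧ (∀ y' ∈ s, v t y' ≤ 0) ∧
      ∀ t' ∈ Ico 0 t, ∀ y' ∈ s, v t' y' < 0 := by
  obtain ⟨t₁, ht₁, y₁, hy₁, hv₁⟩ := hpos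
  have hE : IsCompact ((Icc 0 T ×ˢ s) ∩ (fun p : ℝ × β => v p.1 p.2) ⁻¹' Ici 0) :=
    (isCompact_Icc.prod hs).of_isClosed_subset
      (hv.preimage_isClosed_of_isClosed (isCompact_Icc.prod hs).isClosed isClosed_Ici)
      inter_subset_left
  obtain ⟨⟨t, y⟩, ⟨⟨ht, hy⟩, hvty⟩, hmin⟩ :=
    hE.exists_isMinOn ⟨(t₁, y₁), ⟨ht₁, hy₁⟩, hv₁⟩ continuous_fst.continuousOn
  have hbefore : ∀ t' ∈ Ico 0 t, ∀ y' ∈ s, v t' y' < 0 := by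
    intro t' ht' y' hy'
    by_contra! h
    exact (hmin (a := (t', y')) ⟨⟨⟨ht'.1, ht'.2.le.trans ht.2⟩, hy'⟩, h⟩ : t ≤ t').not_gt ht'.2
  have ht0 : 0 < t := ht.1.lt_of_ne (by rintro rfl; exact (h0 y hy).not_ge hvty)
  refine ⟨t, ⟨ht0, ht.2⟩, y, hy, hvty, fun y' hy' => ?_, hbefore⟩
  have hcont : ContinuousWithinAt (fun t' => v t' y') (Icc 0 T) t :=
    hv.comp (continuous_id.prodMk continuous_const).continuousOn (fun t' ht' => ⟨ht', hy'⟩) t ht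
  have hIcc : Icc 0 T ∈ 𝓝[<] t :=
    mem_of_superset (Ioo_mem_nhdsLT ht0) (Ioo_subset_Icc_self.trans (Icc_subset_Icc_right ht.2))
  refine le_of_tendsto (hcont.mono_of_mem_nhdsWithin hIcc).tendsto ?_
  filter_upwards [Ioo_mem_nhdsLT ht0] with t' ht'
  exact (hbefore t' ⟨ht'.1.le, ht'.2⟩ y' hy').le

theorem Real.log_one_add_le_two_mul_sqrt {x : ℝ} (hx : 0 ≤ x) : log (1 + x) ≤ 2 * √x := by
  have hsqrt : √(1 + x) ≤ 1 + √x := by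
    rw [sqrt_le_left (by positivity)]
    nlinarith [sq_sqrt hx, sqrt_nonneg x]
  have hlog : log √(1 + x) ≤ √(1 + x) - 1 := log_le_sub_one_of_pos (by positivity)
  rw [log_sqrt (by positivity)] at hlog
  linarith

section curlyE

variable {α ε C₀ τ y : ℝ}

theorem curlyE_le (hα : 0 ≤ α) (hC₀ : 1 ≤ C₀) (hε : 0 < ε) (hτ : 0 ≤ τ) (hy : 0 ≤ y) :
    curlyE α ε C₀ τ y ≤ ε * (y ^ 2 / 4 + log C₀) := by
  have hL : 0 ≤ log (1 + ε⁻¹ * exp (τ / 2) * y) := log_nonneg (le_add_of_nonneg_right (by positivity))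
  have he : exp (-τ / 2) ≤ 1 := exp_le_one_iff.2 (by linarith)
  have hbound : 0 ≤ y ^ 2 / 4 + log C₀ := by have := log_nonneg hC₀; positivity
  unfold curlyE
  calc ε * exp (-τ / 2) * (y ^ 2 / 4 - α * log (1 + ε⁻¹ * exp (τ / 2) * y) + log C₀)
      ≤ ε * exp (-τ / 2) * (y ^ 2 / 4 + log C₀) := by gcongr; nlinarith
    _ ≤ ε * (y ^ 2 / 4 + log C₀) := by
      rw [mul_assoc]; gcongr; exact mul_le_of_le_one_left hbound he

theorem neg_two_mul_sqrt_le_curlyE (hα : 0 ≤ α) (hC₀ : 1 ≤ C₀) (hε : 0 < ε) (hτ : 0 ≤ τ)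
    (hy : 0 ≤ y) : -(2 * α * √(ε * y)) ≤ curlyE α ε C₀ τ y := by
  set X := ε⁻¹ * exp (τ / 2) * y
  set e := exp (-τ / 2)
  have he : e ≤ 1 := exp_le_one_iff.2 (by linarith)
  have hscale : ε * e * √X = √(ε * e * y) := by
    have hee : e * exp (τ / 2) = 1 := by rw [← exp_add]; ring_nf; exact exp_zero
    have hsq : (ε * e) ^ 2 * X = ε * e * y * (e * exp (τ / 2)) * (ε * ε⁻¹) := by
      simp only [X]; ring
    rw [hee, mul_inv_cancel₀ hε.ne', mul_one, mul_one] at hsq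
    rw [← hsq, sqrt_mul (sq_nonneg _), sqrt_sq (by positivity)]
  have hlog : ε * e * (α * log (1 + X)) ≤ 2 * α * √(ε * y) :=
    calc ε * e * (α * log (1 + X)) ≤ ε * e * (α * (2 * √X)) := by
          gcongr; exact log_one_add_le_two_mul_sqrt (by positivity)
      _ = 2 * α * √(ε * e * y) := by rw [← hscale]; ring
      _ ≤ 2 * α * √(ε * y) := by
          gcongr; exact mul_le_of_le_one_right hε.le he
  have hrest : 0 ≤ ε * e * (y ^ 2 / 4 + log C₀) := by have := log_nonneg hC₀; positivity
  unfold curlyE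
  linarith [show ε * e * (y ^ 2 / 4 - α * log (1 + X) + log C₀)
    = ε * e * (y ^ 2 / 4 + log C₀) - ε * e * (α * log (1 + X)) by ring]

end curlyE

noncomputable def effPot (A α E y : ℝ) : ℝ :=
  y ^ 2 / 16 + 1 / 4 - (1 + α) / 2 + A / (y + E) ^ 2

/-- Above `y = ε * criticalScale α C₀ θ` the correction `curlyE` lies in `(-y, y/7]`, which keeps
`effPot` nonnegative. -/
noncomputable def criticalScale (α C₀ θ : ℝ) : ℝ :=
  7 * (θ ^ 2 / 4 + log C₀) + 4 * α ^ 2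

noncomputable def barrierRate (α C₀ θ : ℝ) : ℝ :=
  (2 * α + 1) / 4 * criticalScale α C₀ θ + α + 5 / 2

theorem criticalScale_nonneg {α C₀ θ : ℝ} (hC₀ : 1 ≤ C₀) : 0 ≤ criticalScale α C₀ θ := by
  have := log_nonneg hC₀; unfold criticalScale; positivity

theorem barrierRate_pos {α C₀ θ : ℝ} (hα : 0 ≤ α) (hC₀ : 1 ≤ C₀) : 0 < barrierRate α C₀ θ := by
  have := criticalScale_nonneg (α := α) (θ := θ) hC₀; unfold barrierRate; positivity

section effPot

variable {A α E y : ℝ}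

theorem Vfun_sub_eq_effPot (A α E y : ℝ) :
    Vfun A α y - A * (1 / y ^ 2 - 1 / (y + E) ^ 2) = effPot A α E y := by
  unfold Vfun effPot; ring

theorem neg_le_effPot (hA : 0 ≤ A) : -((2 * α + 1) / 4) ≤ effPot A α E y := by
  have : 0 ≤ A / (y + E) ^ 2 := by positivity
  unfold effPot; nlinarith [sq_nonneg y]

theorem effPot_nonneg (hα : -1 < α) (hy : 0 < y) (hyA : y ^ 2 ≤ A / (1 + α))
    (hE : 0 < y + E) (hE' : y + E ≤ 8 / 7 * y) : 0 ≤ effPot A α E y := by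
  have h1α : 0 < 1 + α := by linarith
  have hA : (1 + α) * y ^ 2 ≤ A := by rwa [le_div_iff₀ h1α, mul_comm] at hyA
  have hsq : (y + E) ^ 2 ≤ 64 / 49 * y ^ 2 := by nlinarith
  have hpot : 49 / 64 * (1 + α) ≤ A / (y + E) ^ 2 := by
    rw [le_div_iff₀ (by positivity)]
    nlinarith [mul_le_mul_of_nonneg_left hsq h1α.le]
  unfold effPot; nlinarith [sq_nonneg y]

theorem effPot_curlyE_nonneg {ε C₀ τ θ : ℝ} (hα : 0 ≤ α) (hC₀ : 1 ≤ C₀) (hε : 0 < ε)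
    (hτ : 0 ≤ τ) (hθA : θ ^ 2 ≤ A / (1 + α)) (hyθ : y ≤ θ) (hy : ε * criticalScale α C₀ θ < y) :
    0 ≤ effPot A α (curlyE α ε C₀ τ y) y := by
  have hK : 0 ≤ θ ^ 2 / 4 + log C₀ := by have := log_nonneg hC₀; positivity
  have hscale : 7 * ε * (θ ^ 2 / 4 + log C₀) + 4 * α ^ 2 * ε < y := by
    unfold criticalScale at hy; linarith
  have hy0 : 0 < y := by nlinarith [sq_nonneg α]
  have hy2 : y ^ 2 ≤ θ ^ 2 := pow_le_pow_left₀ hy0.le hyθ 2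
  have hupper : curlyE α ε C₀ τ y ≤ y / 7 := by
    have := curlyE_le hα hC₀ hε hτ hy0.le
    nlinarith
  have hsqrt : 2 * α * √(ε * y) < y := by
    refine lt_of_pow_lt_pow_left₀ 2 hy0.le ?_
    have hα2 : 4 * α ^ 2 * ε < y := by nlinarith
    rw [mul_pow, sq_sqrt (by positivity)]
    nlinarith
  have hlower := neg_two_mul_sqrt_le_curlyE hα hC₀ hε hτ hy0.le
  exact effPot_nonneg (by linarith) hy0 (hy2.trans hθA) (by linarith) (by linarith)

end effPot

theorem Qfun_le {α Z y θ : ℝ} (hα : 1 ≤ α) (hZ : 0 ≤ Z) (hy : 0 < y) (hyθ : y ≤ θ) :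
    Qfun α Z y ≤ Z⁻¹ * θ ^ (α - 1) * y := by
  have hexp : exp (-y ^ 2 / 8) ≤ 1 := exp_le_one_iff.2 (by nlinarith)
  have hpow : y ^ α = y ^ (α - 1) * y := by rw [rpow_sub_one hy.ne', div_mul_cancel₀ _ hy.ne']
  unfold Qfun
  calc Z⁻¹ * y ^ α * exp (-y ^ 2 / 8) ≤ Z⁻¹ * y ^ α := mul_le_of_le_one_right (by positivity) hexp
    _ = Z⁻¹ * y ^ (α - 1) * y := by rw [hpow, mul_assoc]
    _ ≤ Z⁻¹ * θ ^ (α - 1) * y := by gcongr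

section SolTildeZeta

variable {A α ε C₀ Z : ℝ} {ζ : ℝ → ℝ → ℝ}

theorem SolTildeZeta.apply_zero_zero (h : SolTildeZeta A α ε C₀ Z ζ) : ζ 0 0 = 0 := by
  have hc : ContinuousWithinAt (fun t => ζ t 0) (Ici 0) 0 :=
    h.1.comp (continuous_id.prodMk continuous_const).continuousOn
      (fun t ht => ⟨ht, self_mem_Ici⟩) 0 self_mem_Ici
  refine tendsto_nhds_unique (hc.mono Ioi_subset_Ici_self).tendsto
    (tendsto_const_nhds.congr' ?_)
  filter_upwards [self_mem_nhdsWithin] with t ht using (h.2.2.2.2.2.1 t ht).symm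

theorem SolTildeZeta.initial_le (h : SolTildeZeta A α ε C₀ Z ζ) {θ y : ℝ} (hα : 1 ≤ α)
    (hZ : 0 ≤ Z) (hy : y ∈ Icc 0 θ) : ζ 0 y ≤ Z⁻¹ * θ ^ (α - 1) * y := by
  rcases hy.1.eq_or_lt with rfl | hy0
  · simp [h.apply_zero_zero]
  · rw [h.2.2.2.2.2.2.1 y hy0]
    exact Qfun_le hα hZ hy0 hy.2

end SolTildeZeta

noncomputable def barrier (M κ η y : ℝ) : ℝ := M * (y - κ * y ^ 2 / 2 + η)

section barrier

variable {M κ η y : ℝ}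

theorem hasDerivAt_barrier (M κ η y : ℝ) : HasDerivAt (barrier M κ η) (M * (1 - κ * y)) y := by
  have h : HasDerivAt (fun y => M * (y - κ * y ^ 2 / 2 + η)) (M * (1 - κ * (↑2 * y ^ 1) / 2)) y :=
    (((hasDerivAt_id' y).fun_sub (((hasDerivAt_pow 2 y).const_mul κ).div_const 2)).add_const
      η).const_mul M
  unfold barrier
  convert h using 1
  ring

theorem deriv_barrier (M κ η : ℝ) : deriv (barrier M κ η) = fun y => M * (1 - κ * y) :=
  funext fun y => (hasDerivAt_barrier M κ η y).deriv

theorem deriv_deriv_barrier (M κ η y : ℝ) : deriv (deriv (barrier M κ η)) y = -(M * κ) := by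
  rw [deriv_barrier]
  exact ((((hasDerivAt_id' y).const_mul κ).const_sub 1).const_mul M).deriv.trans (by ring)

theorem contDiff_barrier (M κ η : ℝ) : ContDiff ℝ 2 (barrier M κ η) := by
  unfold barrier; fun_prop

theorem barrier_le (hM : 0 ≤ M) (hκ : 0 ≤ κ) : barrier M κ η y ≤ M * (y + η) := by
  unfold barrier; gcongr; nlinarith [sq_nonneg y]

theorem add_le_barrier (hM : 0 ≤ M) (hy : 0 ≤ y) (hκy : κ * y ≤ 1) :
    M / 2 * y + M * η ≤ barrier M κ η y := by
  have : y / 2 ≤ y - κ * y ^ 2 / 2 := by nlinarith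
  unfold barrier; nlinarith

end barrier

theorem timeDeriv_neg_of_touch {A α ε C₀ θ M η τ y uτ u'' : ℝ} (hA : 0 ≤ A) (hα : 0 ≤ α)
    (hC₀ : 1 ≤ C₀) (hε : 0 < ε) (hθA : θ ^ 2 ≤ A / (1 + α)) (hM : 0 < M)
    (hηε : (2 * α + 1) * η ≤ 2 * ε) (hτ : 0 ≤ τ) (hy : 0 ≤ y) (hyθ : y ≤ θ)
    (hu : 0 ≤ barrier M (ε * barrierRate α C₀ θ) η y)
    (hu'' : u'' ≤ -(M * (ε * barrierRate α C₀ θ)))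
    (hpde : uτ - u'' + Vfun A α y * barrier M (ε * barrierRate α C₀ θ) η y =
      ε * (α + 1 / 2) * exp (-τ / 2) *
          (M * (1 - ε * barrierRate α C₀ θ * y) - y / 4 * barrier M (ε * barrierRate α C₀ θ) η y)
        + A * (1 / y ^ 2 - 1 / (y + curlyE α ε C₀ τ y) ^ 2)
          * barrier M (ε * barrierRate α C₀ θ) η y) :
    uτ < 0 := by
  set R := criticalScale α C₀ θ
  set B := barrierRate α C₀ θ
  set u := barrier M (ε * B) η y
  set E := curlyE α ε C₀ τ y
  have hR : 0 ≤ R := criticalScale_nonneg hC₀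
  have hB0 : 0 ≤ B := (barrierRate_pos hα hC₀).le
  have hB : B = (2 * α + 1) / 4 * R + α + 5 / 2 := rfl
  have hdrift : ε * (α + 1 / 2) * exp (-τ / 2) * (M * (1 - ε * B * y) - y / 4 * u)
      ≤ ε * (α + 1 / 2) * M := by
    have he : exp (-τ / 2) ≤ 1 := exp_le_one_iff.2 (by linarith)
    have hεα : 0 ≤ ε * (α + 1 / 2) := by positivity
    have hX : M * (1 - ε * B * y) - y / 4 * u ≤ M := by
      nlinarith [mul_nonneg hM.le (mul_nonneg (mul_nonneg hε.le hB0) hy), mul_nonneg hy hu]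
    rcases le_or_gt (M * (1 - ε * B * y) - y / 4 * u) 0 with hneg | hpos
    · nlinarith [mul_nonpos_of_nonneg_of_nonpos (mul_nonneg hεα (exp_pos (-τ / 2)).le) hneg]
    · calc ε * (α + 1 / 2) * exp (-τ / 2) * (M * (1 - ε * B * y) - y / 4 * u)
          ≤ ε * (α + 1 / 2) * 1 * (M * (1 - ε * B * y) - y / 4 * u) := by gcongr
        _ ≤ ε * (α + 1 / 2) * M := by rw [mul_one]; gcongr
  have hreact : uτ ≤ -(M * (ε * B)) - effPot A α E y * u + ε * (α + 1 / 2) * M := by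
    rw [← Vfun_sub_eq_effPot]; linarith
  rcases le_or_gt y (ε * R) with hsmall | hlarge
  · have hpot := neg_le_effPot (α := α) (E := E) (y := y) hA
    have hu_le : u ≤ M * (ε * R + η) :=
      (barrier_le hM.le (by positivity)).trans (by gcongr)
    have hreaction : -(effPot A α E y * u) ≤ (2 * α + 1) / 4 * (M * (ε * R + η)) := by
      nlinarith [mul_le_mul_of_nonneg_right hpot hu]
    have hη' : (2 * α + 1) / 4 * (M * η) ≤ M * ε / 2 := by
      nlinarith [mul_le_mul_of_nonneg_left hηε hM.le]
    rw [hB] at hreact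
    nlinarith [mul_pos hM hε]
  · have hpot : 0 ≤ effPot A α E y := effPot_curlyE_nonneg hα hC₀ hε hτ hθA hyθ hlarge
    rw [hB] at hreact
    nlinarith [mul_nonneg hpot hu, mul_pos hM hε, mul_nonneg (mul_nonneg hM.le hε.le) hR]

section comparison

variable {A α ε C₀ Z θ T M : ℝ} {ζ : ℝ → ℝ → ℝ}

theorem SolTildeZeta.lt_barrier (hsol : SolTildeZeta A α ε C₀ Z ζ) (hA : 0 ≤ A) (hα : 0 ≤ α)
    (hC₀ : 1 ≤ C₀) (hε : 0 < ε) (hθA : θ ^ 2 ≤ A / (1 + α))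
    (hεθ : ε * barrierRate α C₀ θ * θ ≤ 1) (hM : 0 < M) {η : ℝ} (hη : 0 < η)
    (hηε : (2 * α + 1) * η ≤ 2 * ε) (h0 : ∀ y ∈ Icc 0 θ, ζ 0 y ≤ M / 2 * y)
    (hθT : ∀ τ ∈ Icc 0 T, ζ τ θ ≤ M / 2 * θ) :
    ∀ τ ∈ Icc 0 T, ∀ y ∈ Icc 0 θ, ζ τ y < barrier M (ε * barrierRate α C₀ θ) η y := by
  obtain ⟨hcont, hτreg, hyreg, hnonneg, hpde, hbd, -, -, -⟩ := hsol
  set κ := ε * barrierRate α C₀ θ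
  have hκ : 0 ≤ κ := mul_nonneg hε.le (barrierRate_pos hα hC₀).le
  have hbar : ∀ y ∈ Icc 0 θ, M / 2 * y < barrier M κ η y := fun y hy => by
    linarith [add_le_barrier (η := η) hM.le hy.1 ((mul_le_mul_of_nonneg_left hy.2 hκ).trans hεθ),
      mul_pos hM hη]
  by_contra! hcon
  have hv : ContinuousOn (fun p : ℝ × ℝ => ζ p.1 p.2 - barrier M κ η p.2) (Icc 0 T ×ˢ Icc 0 θ) :=
    (hcont.mono (prod_mono Icc_subset_Ici_self Icc_subset_Ici_self)).sub
      ((contDiff_barrier M κ η).continuous.comp continuous_snd).continuousOn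
  obtain ⟨tb, htb, yb, hyb, htouch, hmax, hbefore⟩ :=
    exists_first_touch isCompact_Icc (v := fun t y => ζ t y - barrier M κ η y) hv
      (fun y hy => by linarith [h0 y hy, hbar y hy])
      (let ⟨τ, hτ, y, hy, h⟩ := hcon; ⟨τ, hτ, y, hy, by linarith⟩)
  have hζ : ζ tb yb = barrier M κ η yb := by linarith [hmax yb hyb]
  have hyb0 : 0 < yb := hyb.1.lt_of_ne <| by
    rintro rfl
    have : barrier M κ η 0 = M * η := by simp [barrier]
    linarith [hbd tb htb.1, mul_pos hM hη]
  have hybθ : yb < θ := hyb.2.lt_of_ne <| by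
    rintro rfl
    linarith [hθT tb ⟨htb.1.le, htb.2⟩, hbar yb hyb]
  have hlocmax : IsLocalMax (fun z => ζ tb z - barrier M κ η z) yb := by
    filter_upwards [Icc_mem_nhds hyb0 hybθ] with z hz
    linarith [hmax z hz]
  have hC2 : ContDiffAt ℝ 2 (fun z => ζ tb z) yb :=
    (hyreg tb htb.1).contDiffAt (Ioi_mem_nhds hyb0)
  have hux : deriv (fun z => ζ tb z) yb = M * (1 - κ * yb) := by
    rw [deriv_eq_of_isLocalMax_sub hlocmax (hC2.differentiableAt (by simp))
      (hasDerivAt_barrier M κ η yb).differentiableAt, deriv_barrier]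
  have huxx : deriv (deriv fun z => ζ tb z) yb ≤ -(M * κ) :=
    deriv_deriv_barrier M κ η yb ▸
      deriv_deriv_le_of_isLocalMax_sub hlocmax hC2 (contDiff_barrier M κ η).contDiffAt
  have huτ : 0 ≤ deriv (fun s => ζ s yb) tb := by
    refine deriv_nonneg_of_eventually_le_left
      (((hτreg yb hyb0).differentiableOn one_ne_zero).differentiableAt (Ioi_mem_nhds htb.1)) ?_
    filter_upwards [Ioo_mem_nhdsLT htb.1] with t ht
    linarith [hbefore t ⟨ht.1.le, ht.2⟩ yb hyb]
  have hpde' := hpde tb htb.1 yb hyb0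
  rw [hux, hζ] at hpde'
  exact (timeDeriv_neg_of_touch hA hα hC₀ hε hθA hM hηε htb.1.le hyb0.le hyb.2
    (hζ ▸ hnonneg tb htb.1.le yb hyb0.le) huxx hpde').not_ge huτ

theorem SolTildeZeta.le_mul_self (hsol : SolTildeZeta A α ε C₀ Z ζ) (hA : 0 ≤ A) (hα : 0 ≤ α)
    (hC₀ : 1 ≤ C₀) (hε : 0 < ε) (hθA : θ ^ 2 ≤ A / (1 + α))
    (hεθ : ε * barrierRate α C₀ θ * θ ≤ 1) (hM : 0 < M) (h0 : ∀ y ∈ Icc 0 θ, ζ 0 y ≤ M / 2 * y)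
    (hθT : ∀ τ ∈ Icc 0 T, ζ τ θ ≤ M / 2 * θ) :
    ∀ τ ∈ Icc 0 T, ∀ y ∈ Icc 0 θ, ζ τ y ≤ M * y := by
  intro τ hτ y hy
  set κ := ε * barrierRate α C₀ θ
  have hlim : Tendsto (fun η => barrier M κ η y) (𝓝[>] 0) (𝓝 (barrier M κ 0 y)) :=
    ((by unfold barrier; fun_prop : Continuous fun η => barrier M κ η y).tendsto 0).mono_left
      nhdsWithin_le_nhds
  have hle : ζ τ y ≤ barrier M κ 0 y := by
    refine ge_of_tendsto hlim ?_
    filter_upwards [Ioo_mem_nhdsGT (by positivity : (0 : ℝ) < 2 * ε / (2 * α + 1))] with η hη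
    exact (hsol.lt_barrier hA hα hC₀ hε hθA hεθ hM hη.1
      ((lt_div_iff₀' (by positivity)).1 hη.2).le h0 hθT τ hτ y hy).le
  simpa using hle.trans (barrier_le hM.le (mul_nonneg hε.le (barrierRate_pos hα hC₀).le))

end comparison

theorem stmt_13_general (A α Z : ℝ) (hA : 0 < A) (hα : 1 < α)
    (hZ : 0 < Z)
    (C₀ : ℝ) (hC₀ : 1 < C₀) :
    ∃ ε₀ > (0:ℝ), ∃ C > (0:ℝ), ∀ ε : ℝ, 0 < ε → ε ≤ ε₀ →
      ∀ ζ : ℝ → ℝ → ℝ, SolTildeZeta A α ε C₀ Z ζ →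
        ∀ T > (0:ℝ), ∀ τ ∈ Set.Icc (0:ℝ) T,
          ∀ y ∈ Set.Icc (0:ℝ) (Real.sqrt (A / (1 + α))),
            ζ τ y ≤ max C (2 / Real.sqrt (A / (1 + α)) *
                sSup ((fun τ' => ζ τ' (Real.sqrt (A / (1 + α)))) '' Set.Icc (0:ℝ) T))
              * y := by
  set θ := √(A / (1 + α))
  have hθ : 0 < θ := sqrt_pos.2 (by positivity)
  have hθA : θ ^ 2 ≤ A / (1 + α) := (sq_sqrt (by positivity)).le
  have hB := barrierRate_pos (α := α) (θ := θ) (by linarith) hC₀.le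
  refine ⟨(barrierRate α C₀ θ * θ)⁻¹, by positivity, 2 * Z⁻¹ * θ ^ (α - 1), by positivity, ?_⟩
  intro ε hε hεε₀ ζ hsol T _ τ hτ y hy
  set S := sSup ((fun τ' => ζ τ' θ) '' Icc 0 T)
  have hbdd : BddAbove ((fun τ' => ζ τ' θ) '' Icc 0 T) :=
    isCompact_Icc.bddAbove_image (hsol.1.comp (continuous_id.prodMk continuous_const).continuousOn
      fun t ht => ⟨ht.1, hθ.le⟩)
  have hεθ : ε * barrierRate α C₀ θ * θ ≤ 1 := by
    rw [mul_assoc]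
    calc ε * (barrierRate α C₀ θ * θ) ≤ (barrierRate α C₀ θ * θ)⁻¹ * (barrierRate α C₀ θ * θ) := by
          gcongr
      _ = 1 := inv_mul_cancel₀ (by positivity)
  refine hsol.le_mul_self hA.le (by linarith) hC₀.le hε hθA hεθ
    ((by positivity : (0 : ℝ) < 2 * Z⁻¹ * θ ^ (α - 1)).trans_le (le_max_left _ _)) ?_ ?_ τ hτ y hy
  · intro y hy
    refine (hsol.initial_le hα.le hZ.le hy).trans (mul_le_mul_of_nonneg_right ?_ hy.1)
    linarith [le_max_left (2 * Z⁻¹ * θ ^ (α - 1)) (2 / θ * S)]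
  · intro τ' hτ'
    calc ζ τ' θ ≤ S := le_csSup hbdd (mem_image_of_mem _ hτ')
      _ = 2 / θ * S / 2 * θ := by field_simp
      _ ≤ max (2 * Z⁻¹ * θ ^ (α - 1)) (2 / θ * S) / 2 * θ := by gcongr; exact le_max_right _ _

/-- bound ζ̃(τ,y) ≲ y near the origin. -/
theorem stmt_13 (A α Z : ℝ) (hA : 0 < A) (hα : 1 < α) (hαA : α * (α - 1) = A)
    (hZ : 0 < Z) (hnorm : ∫ y in Set.Ioi (0:ℝ), (Qfun α Z y) ^ 2 = 1)
    (C₀ : ℝ) (hC₀ : 1 < C₀) :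
    ∃ ε₀ > (0:ℝ), ∃ C > (0:ℝ), ∀ ε : ℝ, 0 < ε → ε ≤ ε₀ →
      ∀ ζ : ℝ → ℝ → ℝ, SolTildeZeta A α ε C₀ Z ζ →
        ∀ T > (0:ℝ), ∀ τ ∈ Set.Icc (0:ℝ) T,
          ∀ y ∈ Set.Icc (0:ℝ) (Real.sqrt (A / (1 + α))),
            ζ τ y ≤ max C (2 / Real.sqrt (A / (1 + α)) *
                sSup ((fun τ' => ζ τ' (Real.sqrt (A / (1 + α)))) '' Set.Icc (0:ℝ) T))
              * y :=
  stmt_13_general A α Z hA hα hZ C₀ hC₀
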